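/- arXiv:2207.13039 — 4 statements merged into one kernel-verified Lean document; each statement's English description precedes it below -/
import Mathlib

section
/- Let $A=[a_{i,j}]_{1\le i,j\le n}$ be a matrix over a commutative ring such that $a_{i,j}=0$ whenever $i+j$ is an even number greater than two. If $n=2m+1$ for some positive integer $m$, then $\mathrm{per}(A)=a_{1,1}\cdot\mathrm{per}[a_{2i,2j+1}]_{1\le i,j\le m}\cdot\mathrm{per}[a_{2i+1,2j}]_{1\le i,j\le m}$. -/
/-!
With 0-based indices, list the rows and columns as 0, the odd indices 2i+1 and the even
indices 2i+2. Once the entry at (0,0) is cleared, the matrix is supported on pairs of indices of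
opposite parity; as m+1 indices are even and only m are odd, its permanent vanishes. Expanding
in the entry (0,0) therefore leaves a₁₁ times the permanent of the remaining minor, which in
this order is the block matrix [0 B; C 0], of permanent per B · per C.
-/

open Equiv Finset

namespace Matrix

variable {ι κ m n R : Type*} [CommSemiring R]

theorem permanent_submatrix_equiv_self [DecidableEq ι] [Fintype ι] [DecidableEq κ] [Fintype κ]
    (e : ι ≃ κ) (M : Matrix κ κ R) :
    (M.submatrix e e).permanent = M.permanent :=
  Fintype.sum_equiv e.permCongr _ _ fun σ =>
    Fintype.prod_equiv e _ _ fun k => by simp [permCongr_apply]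

theorem permanent_eq_zero_of_two_mul_card_ne [DecidableEq ι] [Fintype ι] (M : Matrix ι ι R)
    (s : Finset ι) (hM : ∀ i j, (i ∈ s ↔ j ∈ s) → M i j = 0) (hs : 2 * #s ≠ Fintype.card ι) :
    M.permanent = 0 := by
  refine Finset.sum_eq_zero fun σ _ => ?_
  by_contra hσ
  have hswap : ∀ k, σ k ∈ s ↔ k ∉ s := fun k => by
    by_contra h
    exact hσ (Finset.prod_eq_zero (mem_univ k) (hM _ _ (by tauto)))
  have h₁ : #s ≤ #sᶜ := card_le_card_of_injOn σ (fun k hk => by simpa [hswap] using hk)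
    σ.injective.injOn
  have h₂ : #sᶜ ≤ #s := card_le_card_of_injOn σ (fun k hk => by simpa [hswap] using hk)
    σ.injective.injOn
  rw [card_compl] at h₁ h₂
  omega

theorem permanent_option_eq_updateRow_add_mul [DecidableEq ι] [Fintype ι]
    (M : Matrix (Option ι) (Option ι) R) :
    M.permanent = (M.updateRow none (Function.update (M none) none 0)).permanent +
      M none none * (M.submatrix some some).permanent := by
  set M₀ := M.updateRow none (Function.update (M none) none 0)
  have hM₀ : ∀ i j, (i, j) ≠ (none, none) → M₀ i j = M i j := by
    rintro (_ | i) (_ | j) h <;> simp_all [M₀]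
  have h_off : ∀ σ : Perm (Option ι), σ none ≠ none → ∏ k, M₀ (σ k) k = ∏ k, M (σ k) k := by
    intro σ hσ
    refine Finset.prod_congr rfl fun k _ => hM₀ _ _ ?_
    intro h
    obtain ⟨h₁, rfl⟩ := Prod.mk.inj h
    exact hσ h₁
  have h_fix : ∀ (N : Matrix (Option ι) (Option ι) R) (τ : Perm ι),
      ∏ k, N (Perm.decomposeOption.symm (none, τ) k) k =
        N none none * ∏ k, N (some (τ k)) (some k) :=
    fun N τ => by simp [Fintype.prod_option]
  -- `decomposeOption` sorts the permutations of `Option ι` by the image of `none`.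
  simp only [permanent, ← Perm.decomposeOption.symm.sum_comp, Fintype.sum_prod_type,
    Fintype.sum_option, h_fix, mul_sum]
  rw [Fintype.sum_congr _ _ fun x => Fintype.sum_congr _ _ fun τ => (h_off _ (by simp)).symm]
  simp [M₀, add_comm]

theorem permanent_fromBlocks_zero₂₁ [DecidableEq m] [Fintype m] [DecidableEq n] [Fintype n]
    (A : Matrix m m R) (B : Matrix m n R) (D : Matrix n n R) :
    (fromBlocks A B 0 D).permanent = A.permanent * D.permanent := by
  simp only [permanent, sum_mul_sum, ← Fintype.sum_prod_type']
  have hterm : ∀ p : Perm m × Perm n, (∏ i, A (p.1 i) i) * ∏ i, D (p.2 i) i =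
      ∏ k, fromBlocks A B 0 D (Perm.sumCongr p.1 p.2 k) k := fun p => by
    simp [Fintype.prod_sum_type]
  symm
  refine Finset.sum_bij_ne_zero (fun p _ _ => Perm.sumCongr p.1 p.2) (fun _ _ _ => mem_univ _)
    ?_ ?_ ?_
  · intro p _ _ q _ _ h
    exact Perm.sumCongrHom_injective h
  · intro σ _ hσ
    have hmaps : Set.MapsTo σ (Set.range Sum.inl) (Set.range Sum.inl) := by
      rintro _ ⟨a, rfl⟩
      rcases h : σ (Sum.inl a) with a' | b
      · exact ⟨a', rfl⟩
      · exact absurd (Finset.prod_eq_zero (mem_univ (Sum.inl a)) (by simp [h])) hσ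
    obtain ⟨⟨τ, ρ⟩, h⟩ := Perm.mem_sumCongrHom_range_of_perm_mapsTo_inl hmaps
    refine ⟨(τ, ρ), mem_univ _, ?_, h⟩
    rwa [hterm, ← Perm.sumCongrHom_apply, h]
  · exact fun p _ _ => hterm p

theorem permanent_fromBlocks_zero_zero [DecidableEq n] [Fintype n] (B C : Matrix n n R) :
    (fromBlocks 0 B C 0).permanent = B.permanent * C.permanent := by
  have : fromBlocks 0 B C 0 = (fromBlocks C 0 0 B).submatrix (Equiv.sumComm n n) id := by
    ext (i | i) (j | j) <;> rfl
  rw [this, permanent_permute_cols, permanent_fromBlocks_zero₂₁, mul_comm]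

end Matrix

open Matrix

noncomputable def finParityEquiv (m : ℕ) : Option (Fin m ⊕ Fin m) ≃ Fin (2 * m + 1) :=
  Equiv.ofBijective
    (fun x => x.elim ⟨0, by omega⟩
      (Sum.elim (fun i => ⟨2 * i + 1, by omega⟩) (fun i => ⟨2 * i + 2, by omega⟩)))
    ((Fintype.bijective_iff_injective_and_card _).mpr
      ⟨by rintro (_ | i | i) (_ | j | j) h <;> simp [Fin.ext_iff] at h ⊢ <;> omega,
        by simp; ring⟩)

@[simp] lemma finParityEquiv_none (m : ℕ) : (finParityEquiv m none : ℕ) = 0 := rfl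

@[simp] lemma finParityEquiv_some_inl (m : ℕ) (i : Fin m) :
    (finParityEquiv m (some (Sum.inl i)) : ℕ) = 2 * i + 1 := rfl

@[simp] lemma finParityEquiv_some_inr (m : ℕ) (i : Fin m) :
    (finParityEquiv m (some (Sum.inr i)) : ℕ) = 2 * i + 2 := rfl

/-- If `A = [a_{i,j}]_{1 ≤ i,j ≤ n}` (rows/columns indexed `1..n`, realized as
`Fin n` with `i` standing for the `(i+1)`-st row/column) is a matrix over a commutative ring
with `a_{i,j} = 0` whenever `i + j` is an even number greater than two, and `n = 2m+1` with
`m ≥ 1`, then `per(A) = a_{1,1} * per[a_{2i,2j+1}]_{1≤i,j≤m} * per[a_{2i+1,2j}]_{1≤i,j≤m}`. -/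
theorem stmt2 {R : Type*} [CommRing R] (m : ℕ) (hm : 0 < m)
    (A : Matrix (Fin (2 * m + 1)) (Fin (2 * m + 1)) R)
    (hA : ∀ i j : Fin (2 * m + 1), Even (((i : ℕ) + 1) + ((j : ℕ) + 1)) →
      ((i : ℕ) + 1) + ((j : ℕ) + 1) > 2 → A i j = 0) :
    A.permanent =
      A ⟨0, by omega⟩ ⟨0, by omega⟩ *
      ((Matrix.of fun i j : Fin m =>
          A ⟨2 * (i : ℕ) + 1, by have := i.isLt; omega⟩
            ⟨2 * (j : ℕ) + 2, by have := j.isLt; omega⟩).permanent *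
      (Matrix.of fun i j : Fin m =>
          A ⟨2 * (i : ℕ) + 2, by have := i.isLt; omega⟩
            ⟨2 * (j : ℕ) + 1, by have := j.isLt; omega⟩).permanent) := by
  have hA' : ∀ i j : Fin (2 * m + 1), (i : ℕ) % 2 = j % 2 → 0 < (i : ℕ) + j → A i j = 0 :=
    fun i j h₁ h₂ => hA i j (Nat.even_iff.mpr (by omega)) (by omega)
  rw [← permanent_submatrix_equiv_self (finParityEquiv m), permanent_option_eq_updateRow_add_mul]
  set N := A.submatrix (finParityEquiv m) (finParityEquiv m)
  set P := N.submatrix some some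
  have h_unbalanced : (N.updateRow none (Function.update (N none) none 0)).permanent = 0 := by
    refine permanent_eq_zero_of_two_mul_card_ne _
      (univ.map (Function.Embedding.inl.trans Function.Embedding.some)) ?_ (by simp; omega)
    rintro (_ | i | i) (_ | j | j) h <;> simp at h <;>
      simp [N] <;> exact hA' _ _ (by simp) (by simp)
  have h_blocks : P = fromBlocks 0 P.toBlocks₁₂ P.toBlocks₂₁ 0 := by
    conv_lhs => rw [← fromBlocks_toBlocks P]
    congr <;> ext i j <;> exact hA' _ _ (by simp) (by simp)
  rw [h_unbalanced, h_blocks, permanent_fromBlocks_zero_zero, zero_add]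
  rfl
end

section
/- Let $A=[a_{i,j}]_{1\le i,j\le 2m}$ be a skew-symmetric matrix of even order over a commutative ring (i.e. $a_{j,i}=-a_{i,j}$ for all $i,j$) such that $a_{i,j}=0$ whenever $i+j$ is an even number greater than two. Then $\det(A)=\left(\det[a_{2i,2j-1}]_{1\le i,j\le m}\right)^2$. -/
/-!
Reorder rows and columns of `A` so that the odd-numbered ones (in the paper's `1`-based
indexing) come first. The vanishing hypothesis kills the even–even block, and skew-symmetry
makes the odd–even block the negated transpose of `B = [a_{2i,2j-1}]`, so the reordered matrix
is `[[C, -Bᵀ], [B, 0]]` for some `C`. Swapping its two column blocks yields a block-triangular matrix, and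
the two signs `(-1)^m` cancel: `det A = det B ^ 2`.
-/

open Equiv Matrix

theorem Equiv.Perm.sign_sumComm_self (n : Type*) [Fintype n] [DecidableEq n] :
    Perm.sign (sumComm n n) = (-1) ^ Fintype.card n := by
  rw [Perm.sign_eq_sign_of_equiv _ (prodCongrLeft fun _ : n => swap false true)
      (boolProdEquivSum n).symm (by rintro (i | i) <;> rfl),
    Perm.sign_prodCongrLeft, Perm.sign_swap Bool.false_ne_true, Finset.prod_const,
    Finset.card_univ]

theorem Matrix.det_fromBlocks_zero₂₂ {n R : Type*} [Fintype n] [DecidableEq n] [CommRing R]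
    (A B C : Matrix n n R) :
    (fromBlocks A B C 0).det = (-1) ^ Fintype.card n * B.det * C.det := by
  have : fromBlocks A B C 0 = (fromBlocks B A 0 C).submatrix id (sumComm n n) := by
    simp
  rw [this, det_permute', Perm.sign_sumComm_self, det_fromBlocks_zero₂₁]
  push_cast
  ring

theorem Matrix.det_fromBlocks_neg_transpose_zero {n R : Type*} [Fintype n] [DecidableEq n]
    [CommRing R] (A B : Matrix n n R) : (fromBlocks A (-Bᵀ) B 0).det = B.det ^ 2 := by
  rw [det_fromBlocks_zero₂₂, det_neg, det_transpose, ← mul_assoc, ← pow_add,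
    ← two_mul, pow_mul, neg_one_sq, one_pow, one_mul, sq]

/-- In the paper's `1`-based indexing, `inl` covers the odd and `inr` the even indices. -/
noncomputable def finSumFinEquivEvenOdd (m : ℕ) : Fin m ⊕ Fin m ≃ Fin (2 * m) :=
  Equiv.ofBijective (Sum.elim (fun i => ⟨2 * i, by omega⟩) (fun i => ⟨2 * i + 1, by omega⟩)) <|
    (Fintype.bijective_iff_injective_and_card _).2
      ⟨by rintro (i | i) (j | j) h <;> simp [Fin.ext_iff] at h ⊢ <;> omega, by simp; ring⟩

@[simp]
theorem coe_finSumFinEquivEvenOdd_inr (m : ℕ) (i : Fin m) :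
    (finSumFinEquivEvenOdd m (.inr i) : ℕ) = 2 * i + 1 :=
  rfl

/-- If `A = [a_{i,j}]_{1 ≤ i,j ≤ 2m}` (rows/columns indexed `1..2m`, realized as
`Fin (2m)` with `i` standing for the `(i+1)`-st row/column) is a skew-symmetric matrix over a
commutative ring with `a_{i,j} = 0` whenever `i + j` is an even number greater than two, then
`det(A) = (det[a_{2i,2j-1}]_{1≤i,j≤m})^2`. -/
theorem stmt9 {R : Type*} [CommRing R] (m : ℕ)
    (A : Matrix (Fin (2 * m)) (Fin (2 * m)) R)
    (hskew : ∀ i j : Fin (2 * m), A j i = -A i j)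
    (hA : ∀ i j : Fin (2 * m), Even (((i : ℕ) + 1) + ((j : ℕ) + 1)) →
      ((i : ℕ) + 1) + ((j : ℕ) + 1) > 2 → A i j = 0) :
    A.det =
      (Matrix.of fun i j : Fin m =>
          A ⟨2 * (i : ℕ) + 1, by have := i.isLt; omega⟩
            ⟨2 * (j : ℕ), by have := j.isLt; omega⟩).det ^ 2 := by
  set B := Matrix.of fun i j : Fin m =>
    A ⟨2 * (i : ℕ) + 1, by have := i.isLt; omega⟩ ⟨2 * (j : ℕ), by have := j.isLt; omega⟩
  let e := finSumFinEquivEvenOdd m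
  have hblocks : A.submatrix e e = fromBlocks (A.submatrix (e ∘ .inl) (e ∘ .inl)) (-Bᵀ) B 0 := by
    ext (i | i) (j | j)
    · rfl
    · exact hskew _ _
    · rfl
    · exact hA _ _ ⟨i + j + 2, by simp [e]; ring⟩ (by simp [e]; omega)
  rw [← det_submatrix_equiv_self e, hblocks, det_fromBlocks_neg_transpose_zero]
end

section
/- Let $p>3$ be a prime with $p\equiv 1\pmod{12}$ or $p\equiv 11\pmod{12}$. Then $D_p(6,6)\equiv 0\pmod p$. -/
/-- `D_p(c,d)`: the determinant of the `(p-1) × (p-1)` integer matrix with `(i,j)` entry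
`(i² + c·i·j + d·j²)^(p-2)` for `1 ≤ i, j ≤ p-1`. -/
def Dp (p : ℕ) (c d : ℤ) : ℤ :=
  (Matrix.of fun i j : Fin (p - 1) =>
    (((i : ℕ) + 1 : ℤ) ^ 2 + c * ((i : ℕ) + 1 : ℤ) * ((j : ℕ) + 1 : ℤ)
      + d * ((j : ℕ) + 1 : ℤ) ^ 2) ^ (p - 2)).det

/-!
Modulo `p` the entries become `(i² + 6ij + 6j²)⁻¹` (Fermat), so it suffices that every row sums
to zero. Substituting `j = i t`, the row indexed by `i` sums to `i⁻² (∑_t (6t² + 6t + 1)⁻¹ - 1)`.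
When `3` is a square mod `p` (quadratic reciprocity, `p ≡ ±1 mod 12`) the quadratic
`6t² + 6t + 1`, of discriminant `12`, splits with distinct roots `a, b`, and partial fractions
give `∑_t ((t - a)(t - b))⁻¹ = 2 / (a - b)²` (with `0⁻¹ = 0`), which makes the sum over `t`
equal to `1`.
-/

open Finset

namespace FiniteField

variable {K : Type*} [Field K] [Fintype K]

theorem pow_card_sub_two_eq_inv (hK : 2 < Fintype.card K) (a : K) :
    a ^ (Fintype.card K - 2) = a⁻¹ := by
  rcases eq_or_ne a 0 with rfl | ha
  · rw [zero_pow (by omega), inv_zero]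
  · refine eq_inv_of_mul_eq_one_left ?_
    rw [← pow_succ, show Fintype.card K - 2 + 1 = Fintype.card K - 1 by omega,
      pow_card_sub_one_eq_one a ha]

theorem sum_inv_sub (a : K) : ∑ x, (x - a)⁻¹ = ∑ x : K, x⁻¹ :=
  Fintype.sum_equiv (Equiv.subRight a) _ _ fun _ => rfl

theorem sum_inv_sub_mul_inv_sub {a b : K} (hab : a ≠ b) :
    ∑ x, ((x - a) * (x - b))⁻¹ = 2 / (a - b) ^ 2 := by
  have hab' : a - b ≠ 0 := sub_ne_zero.mpr hab
  -- away from the poles the summand is `((x - a)⁻¹ - (x - b)⁻¹) / (a - b)`, whose sum vanishes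
  set g : K → K := fun x => ((x - a) * (x - b))⁻¹ - ((x - a)⁻¹ - (x - b)⁻¹) / (a - b)
  have hpartial : ∑ x, ((x - a)⁻¹ - (x - b)⁻¹) / (a - b) = 0 := by
    rw [← sum_div, sum_sub_distrib, sum_inv_sub, sum_inv_sub, sub_self, zero_div]
  have hpoles : ∑ x, g x = g a + g b := by
    refine sum_eq_add_of_mem a b (mem_univ _) (mem_univ _) hab fun x _ ⟨hxa, hxb⟩ => ?_
    have := sub_ne_zero.mpr hxa
    have := sub_ne_zero.mpr hxb
    simp only [g]
    field_simp
    ring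
  calc ∑ x, ((x - a) * (x - b))⁻¹
      = ∑ x, g x + ∑ x, ((x - a)⁻¹ - (x - b)⁻¹) / (a - b) := by
        rw [← sum_add_distrib]; simp only [g, sub_add_cancel]
    _ = 2 / (a - b) ^ 2 := by
        rw [hpartial, add_zero, hpoles]
        simp only [g, sub_self, zero_mul, mul_zero, inv_zero, ← neg_sub a b, inv_neg]
        field_simp
        ring

theorem sum_inv_quadratic (h2 : (2 : K) ≠ 0) {A B C s : K} (hA : A ≠ 0)
    (hs : discrim A B C = s * s) (hs0 : s ≠ 0) :
    ∑ x, (A * (x * x) + B * x + C)⁻¹ = 2 * A / discrim A B C := by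
  set a := (-B + s) / (2 * A)
  set b := (-B - s) / (2 * A)
  have hfactor : ∀ x, A * (x * x) + B * x + C = A * ((x - a) * (x - b)) := by
    intro x
    simp only [a, b]
    field_simp
    rw [discrim] at hs
    linear_combination -hs
  have hab : a - b = s / A := by
    simp only [a, b]; field_simp; ring
  have hab0 : a ≠ b := sub_ne_zero.mp (hab ▸ div_ne_zero hs0 hA)
  calc ∑ x, (A * (x * x) + B * x + C)⁻¹ = A⁻¹ * ∑ x, ((x - a) * (x - b))⁻¹ := by
        simp only [hfactor, mul_inv A, mul_sum]
    _ = 2 * A / discrim A B C := by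
        rw [sum_inv_sub_mul_inv_sub hab0, hab, hs]
        field_simp

theorem sum_inv_sq_add_six_mul_add_six_sq (h6 : (6 : K) ≠ 0) (h3 : IsSquare (3 : K)) {c : K}
    (hc : c ≠ 0) : ∑ y, (c ^ 2 + 6 * c * y + 6 * y ^ 2)⁻¹ = (c ^ 2)⁻¹ := by
  obtain ⟨r, hr⟩ := h3
  have h6' : (2 : K) * 3 ≠ 0 := by norm_num [h6]
  have h2 : (2 : K) ≠ 0 := left_ne_zero_of_mul h6'
  have hr0 : r ≠ 0 := by
    rintro rfl
    exact right_ne_zero_of_mul h6' (by simpa using hr)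
  have hdisc : discrim (6 : K) 6 1 = (2 * r) * (2 * r) := by
    rw [discrim]; linear_combination 4 * hr
  calc ∑ y, (c ^ 2 + 6 * c * y + 6 * y ^ 2)⁻¹
      = ∑ t, (c ^ 2 + 6 * c * (c * t) + 6 * (c * t) ^ 2)⁻¹ :=
        (Fintype.sum_equiv (Equiv.mulLeft₀ c hc) _ _ fun _ => rfl).symm
    _ = (c ^ 2)⁻¹ * ∑ t, (6 * (t * t) + 6 * t + 1)⁻¹ := by
        rw [mul_sum]
        refine sum_congr rfl fun t _ => ?_
        rw [← mul_inv]
        ring_nf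
    _ = (c ^ 2)⁻¹ := by
        rw [sum_inv_quadratic h2 h6 hdisc (mul_ne_zero h2 hr0), discrim,
          show (6 : K) ^ 2 - 4 * 6 * 1 = 2 * 6 by ring, div_self (mul_ne_zero h2 h6), mul_one]

end FiniteField

theorem ZMod.sum_univ_eq_sum_range {n : ℕ} [NeZero n] {M : Type*} [AddCommMonoid M]
    (f : ZMod n → M) : ∑ x, f x = ∑ k ∈ range n, f k :=
  (sum_nbij' ZMod.val (fun k => k) (fun x _ => mem_range.mpr (ZMod.val_lt x))
    (fun _ _ => mem_univ _) (fun x _ => ZMod.natCast_zmod_val x)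
    (fun _ hk => ZMod.val_cast_of_lt (mem_range.mp hk)) fun x _ => by
      rw [ZMod.natCast_zmod_val])

theorem ZMod.sum_univ_eq_add_sum_fin {n : ℕ} [NeZero n] {M : Type*} [AddCommMonoid M]
    (f : ZMod n → M) : ∑ x, f x = f 0 + ∑ j : Fin (n - 1), f ((j : ℕ) + 1) := by
  obtain ⟨m, rfl⟩ : ∃ m, n = m + 1 := Nat.exists_eq_succ_of_ne_zero (NeZero.ne n)
  rw [ZMod.sum_univ_eq_sum_range, sum_range_succ', Nat.add_sub_cancel,
    Fin.sum_univ_eq_sum_range (fun k => f ((k : ZMod (m + 1)) + 1)), add_comm]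
  push_cast
  rfl

theorem ZMod.isSquare_three_of_mod_twelve {p : ℕ} [Fact p.Prime]
    (hp : p % 12 = 1 ∨ p % 12 = 11) : IsSquare (3 : ZMod p) := by
  have hcast : ((3 : ℕ) : ZMod p) = 3 := by norm_num
  rw [← hcast]
  rcases hp with hp | hp
  · rw [ZMod.exists_sq_eq_prime_iff_of_mod_four_eq_one (by omega) (by norm_num),
      ← ZMod.natCast_mod, show p % 3 = 1 by omega]
    exact ⟨1, by norm_num⟩
  · rw [ZMod.exists_sq_eq_prime_iff_of_mod_four_eq_three (by omega) (by norm_num) (by omega),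
      ← ZMod.natCast_mod, show p % 3 = 2 by omega]
    decide

theorem Matrix.det_eq_zero_of_sum_row_eq_zero {n R : Type*} [Fintype n] [DecidableEq n]
    [Nonempty n] [CommRing R] {M : Matrix n n R} (h : ∀ i, ∑ j, M i j = 0) : M.det = 0 :=
  det_eq_zero_of_mulVec_eq_zero_of_mem_nonZeroDivisors (v := 1) (i := Classical.arbitrary n)
    (funext fun i => by simpa [mulVec, dotProduct] using h i) (one_mem _)

/-- For any prime `p > 3` with `p ≡ ±1 (mod 12)`, `D_p(6, 6) ≡ 0 (mod p)`. -/
theorem stmt15 (p : ℕ) (hp : p.Prime) (hp3 : 3 < p) (hp12 : p % 12 = 1 ∨ p % 12 = 11) :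
    (p : ℤ) ∣ Dp p 6 6 := by
  have := Fact.mk hp
  have hinv (a : ZMod p) : a ^ (p - 2) = a⁻¹ := by
    simpa using FiniteField.pow_card_sub_two_eq_inv (by rw [ZMod.card]; omega) a
  have h6 : (6 : ZMod p) ≠ 0 := by
    have : ¬p ∣ 2 * 3 := fun h => by
      rcases hp.dvd_mul.mp h with h | h <;> have := Nat.le_of_dvd (by norm_num) h <;> omega
    exact_mod_cast (ZMod.natCast_eq_zero_iff 6 p).not.mpr this
  have : Nonempty (Fin (p - 1)) := ⟨⟨0, by omega⟩⟩
  rw [← ZMod.intCast_zmod_eq_zero_iff_dvd, Dp, Int.cast_det]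
  refine Matrix.det_eq_zero_of_sum_row_eq_zero fun i => ?_
  have hc : ((i : ℕ) : ZMod p) + 1 ≠ 0 := by
    rw [← Nat.cast_succ, Ne, ZMod.natCast_eq_zero_iff]
    exact fun h => Nat.succ_ne_zero _ (Nat.eq_zero_of_dvd_of_lt h (by have := i.2; omega))
  have hrow := ZMod.sum_univ_eq_add_sum_fin fun y : ZMod p =>
    ((((i : ℕ) : ZMod p) + 1) ^ 2 + 6 * (((i : ℕ) : ZMod p) + 1) * y + 6 * y ^ 2)⁻¹
  rw [FiniteField.sum_inv_sq_add_six_mul_add_six_sq h6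
    (ZMod.isSquare_three_of_mod_twelve hp12) hc] at hrow
  simp only [Matrix.map_apply, Matrix.of_apply]
  push_cast
  simpa [hinv] using hrow
end

section
/- Let $p$ be a prime greater than $3$ and let $c,d$ be integers with $p\nmid d(c^2-4d)$. If $c^2-4d\equiv 2d\left(\frac{c^2-4d}{p}\right)\pmod p$, where $\left(\frac{c^2-4d}{p}\right)$ is the Legendre symbol, then $D_p(c,d)\equiv 0\pmod p$. -/
open Finset

namespace FiniteField

variable {K : Type*} [Field K] [Fintype K]

theorem sum_pow_of_lt_two_mul_card_sub_one {n : ℕ} (hn : n < 2 * (Fintype.card K - 1)) :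
    ∑ x : K, x ^ n = if n = Fintype.card K - 1 then -1 else 0 := by
  classical
  have hq : 1 < Fintype.card K := Fintype.one_lt_card
  rcases lt_trichotomy n (Fintype.card K - 1) with hlt | rfl | hgt
  · rw [if_neg hlt.ne, sum_pow_lt_card_sub_one K n hlt]
  · have h : ∀ x : K, x ^ (Fintype.card K - 1) = 1 - if x = 0 then 1 else 0 := fun x => by
      by_cases hx : x = 0
      · simp [hx, zero_pow (by omega : Fintype.card K - 1 ≠ 0)]
      · simp [hx, pow_card_sub_one_eq_one x hx]
    simp [h, sum_sub_distrib]
  · rw [if_neg hgt.ne', ← sum_pow_lt_card_sub_one K (n - (Fintype.card K - 1)) (by omega)]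
    refine sum_congr rfl fun x _ => ?_
    by_cases hx : x = 0
    · simp [hx, zero_pow (by omega : n ≠ 0), zero_pow (by omega : n - (Fintype.card K - 1) ≠ 0)]
    · rw [← mul_one (x ^ (n - _)), ← pow_card_sub_one_eq_one x hx, ← pow_add,
        Nat.sub_add_cancel hgt.le]

theorem sum_pow_homogeneous_quadratic {A : K} (hA : A ≠ 0) (C D : K) (n : ℕ) :
    ∑ x : K, (A ^ 2 + C * A * x + D * x ^ 2) ^ n
      = (A ^ 2) ^ n * ∑ u : K, (1 + C * u + D * u ^ 2) ^ n := by
  rw [mul_sum]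
  refine (Fintype.sum_bijective (A * ·) (Equiv.mulLeft₀ A hA).bijective _ _ fun u => ?_).symm
  rw [← mul_pow]
  ring

end FiniteField

namespace CharP

variable {R : Type*} [CommRing R] {p : ℕ} [Fact p.Prime] [CharP R p]

theorem cast_choose_sub_one {k : ℕ} (hk : k ≤ p - 1) : ((p - 1).choose k : R) = (-1) ^ k := by
  have hp := (Fact.out : p.Prime).two_le
  induction k with
  | zero => simp
  | succ k ih =>
    have hpascal : p.choose (k + 1) = (p - 1).choose k + (p - 1).choose (k + 1) := by
      conv_lhs => rw [← Nat.sub_add_cancel (by omega : 1 ≤ p)]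
      exact Nat.choose_succ_succ _ _
    have hdvd : (p.choose (k + 1) : R) = 0 := (cast_eq_zero_iff R p _).mpr
      ((Fact.out : p.Prime).dvd_choose_self k.succ_ne_zero (by omega))
    rw [hpascal, Nat.cast_add, ih (by omega)] at hdvd
    rw [pow_succ]
    linear_combination hdvd

theorem cast_choose_sub_two {k : ℕ} (hk : k ≤ p - 2) :
    ((p - 2).choose k : R) = (-1) ^ k * (k + 1) := by
  induction k with
  | zero => simp
  | succ k ih =>
    have hpascal : (p - 1).choose (k + 1) = (p - 2).choose k + (p - 2).choose (k + 1) := by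
      rw [show p - 1 = p - 2 + 1 by omega]
      exact Nat.choose_succ_succ _ _
    have h := cast_choose_sub_one (R := R) (p := p) (k := k + 1) (by omega)
    rw [hpascal, Nat.cast_add, ih (by omega)] at h
    push_cast
    linear_combination h

end CharP

namespace ZMod

theorem sum_fin_pred_natCast_add_one {M : Type*} [AddCommGroup M] (n : ℕ) [NeZero n]
    (f : ZMod n → M) : ∑ j : Fin (n - 1), f ((j : ℕ) + 1) = ∑ x, f x - f 0 := by
  have hrange : ∑ x, f x = ∑ i ∈ range (n - 1 + 1), f i := by
    rw [Nat.sub_add_cancel NeZero.one_le]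
    exact sum_nbij' val (↑) (fun x _ => mem_range.mpr x.val_lt) (fun _ _ => mem_univ _)
      (fun x _ => natCast_zmod_val x) (fun _ hi => val_cast_of_lt (mem_range.mp hi))
      (fun x _ => by rw [natCast_zmod_val])
  rw [eq_sub_iff_add_eq, hrange, sum_range_succ',
    Fin.sum_univ_eq_sum_range (fun i => f ((i : ℕ) + 1))]
  push_cast
  rfl

variable {p : ℕ} [Fact p.Prime]

theorem two_mul_sum_sq_sub_pow_sub_two (hp : p ≠ 2) (Δ : ZMod p) :
    2 * ∑ w : ZMod p, (w ^ 2 - Δ) ^ (p - 2) = Δ ^ (p / 2 - 1) := by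
  obtain ⟨m, hm⟩ := (Fact.out : p.Prime).odd_of_ne_two hp
  have hm1 : 1 ≤ m := by have := (Fact.out : p.Prime).two_le; omega
  have hpow : ∀ k ∈ range (p - 1), ∑ w : ZMod p, (w ^ 2) ^ k = if k = m then -1 else 0 := by
    intro k hk
    rw [mem_range] at hk
    simp only [← pow_mul]
    rw [FiniteField.sum_pow_of_lt_two_mul_card_sub_one (by rw [ZMod.card]; omega), ZMod.card]
    congr 1
    apply propext
    omega
  calc 2 * ∑ w : ZMod p, (w ^ 2 - Δ) ^ (p - 2)
      = 2 * ∑ k ∈ range (p - 1),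
          (∑ w : ZMod p, (w ^ 2) ^ k) * ((-Δ) ^ (p - 2 - k) * (p - 2).choose k) := by
        simp_rw [sub_eq_add_neg, add_pow, sum_mul]
        rw [sum_comm, show p - 2 + 1 = p - 1 by omega]
        simp_rw [mul_assoc]
    _ = -2 * ((-Δ) ^ (m - 1) * (-1) ^ m * (m + 1)) := by
        rw [sum_congr rfl fun k hk => congrArg (· * _) (hpow k hk)]
        simp_rw [ite_mul, zero_mul, sum_ite_eq', mem_range, if_pos (by omega : m < p - 1),
          CharP.cast_choose_sub_two (by omega : m ≤ p - 2), show p - 2 - m = m - 1 by omega]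
        ring
    _ = Δ ^ (p / 2 - 1) := by
        have h2m : (2 * (m + 1) : ZMod p) = 1 := by
          have : ((2 * m + 1 : ℕ) : ZMod p) = 0 := by rw [← hm]; exact natCast_self p
          push_cast at this
          linear_combination this
        obtain ⟨r, rfl⟩ : ∃ r, m = r + 1 := ⟨m - 1, by omega⟩
        have hsign : ((-1 : ZMod p)) ^ r * (-1) ^ (r + 1) = -1 := by
          rw [← pow_add, show r + (r + 1) = 2 * r + 1 by ring, pow_succ, pow_mul]
          norm_num
        rw [show p / 2 - 1 = r by omega, Nat.add_sub_cancel, neg_pow]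
        push_cast at h2m ⊢
        linear_combination Δ ^ r * h2m - 2 * Δ ^ r * (r + 2) * hsign

theorem sum_quadratic_pow_sub_two (hp : p ≠ 2) {C D : ZMod p} (hD : D ≠ 0) :
    ∑ u : ZMod p, (1 + C * u + D * u ^ 2) ^ (p - 2) = 2 * D * (C ^ 2 - 4 * D) ^ (p / 2 - 1) := by
  have h2 : (2 : ZMod p) ≠ 0 := Ring.two_ne_zero (by rwa [ringChar_zmod_n])
  have h4D : 4 * D ≠ 0 :=
    mul_ne_zero (by simpa [show (4 : ZMod p) = 2 * 2 by norm_num] using h2) hD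
  have hinv : 4 * D * (4 * D) ^ (p - 2) = 1 := by
    rw [← pow_succ', show p - 2 + 1 = p - 1 by have := (Fact.out : p.Prime).two_le; omega]
    exact pow_card_sub_one_eq_one h4D
  have hshift : (4 * D) ^ (p - 2) * ∑ u : ZMod p, (1 + C * u + D * u ^ 2) ^ (p - 2)
      = ∑ w : ZMod p, (w ^ 2 - (C ^ 2 - 4 * D)) ^ (p - 2) := by
    rw [mul_sum]
    refine Fintype.sum_bijective (fun u => 2 * D * u + C) ?_ _ _ fun u => ?_
    · exact (Equiv.addRight C).bijective.comp (Equiv.mulLeft₀ _ (mul_ne_zero h2 hD)).bijective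
    · rw [← mul_pow]
      ring
  calc ∑ u : ZMod p, (1 + C * u + D * u ^ 2) ^ (p - 2)
      = 4 * D * ((4 * D) ^ (p - 2) * ∑ u : ZMod p, (1 + C * u + D * u ^ 2) ^ (p - 2)) := by
        rw [← mul_assoc, hinv, one_mul]
    _ = 2 * D * (C ^ 2 - 4 * D) ^ (p / 2 - 1) := by
        rw [hshift, ← two_mul_sum_sq_sub_pow_sub_two hp]
        ring

theorem sum_quadratic_pow_sub_two_eq_one (hp : p ≠ 2) {C D : ZMod p} (hD : D ≠ 0)
    (hΔ0 : C ^ 2 - 4 * D ≠ 0) (hΔ : C ^ 2 - 4 * D = 2 * D * (C ^ 2 - 4 * D) ^ (p / 2)) :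
    ∑ u : ZMod p, (1 + C * u + D * u ^ 2) ^ (p - 2) = 1 := by
  have hp3 : 3 ≤ p := by have := (Fact.out : p.Prime).two_le; omega
  rw [sum_quadratic_pow_sub_two hp hD]
  refine mul_right_cancel₀ hΔ0 ?_
  rw [one_mul, mul_assoc, ← pow_succ, Nat.sub_add_cancel (by omega)]
  exact hΔ.symm

theorem sum_fin_pred_quadratic_pow_eq_zero {A C D : ZMod p} (hA : A ≠ 0) {n : ℕ}
    (hS : ∑ u : ZMod p, (1 + C * u + D * u ^ 2) ^ n = 1) :
    ∑ j : Fin (p - 1), (A ^ 2 + C * A * ((j : ℕ) + 1) + D * ((j : ℕ) + 1) ^ 2) ^ n = 0 := by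
  rw [sum_fin_pred_natCast_add_one p fun x => (A ^ 2 + C * A * x + D * x ^ 2) ^ n,
    FiniteField.sum_pow_homogeneous_quadratic hA, hS]
  simp

end ZMod

theorem stmt17_general (p : ℕ) [Fact p.Prime] (c d : ℤ)
    (hd : ¬ (p : ℤ) ∣ d * (c ^ 2 - 4 * d))
    (h : c ^ 2 - 4 * d ≡ 2 * d * legendreSym p (c ^ 2 - 4 * d) [ZMOD p]) :
    (p : ℤ) ∣ Dp p c d := by
  have hdΔ : (d : ZMod p) * ((c : ZMod p) ^ 2 - 4 * d) ≠ 0 := by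
    exact_mod_cast (ZMod.intCast_zmod_eq_zero_iff_dvd _ p).not.mpr hd
  obtain ⟨hd0, hΔ0⟩ := mul_ne_zero_iff.mp hdΔ
  have hΔ : (c : ZMod p) ^ 2 - 4 * d = 2 * d * ((c : ZMod p) ^ 2 - 4 * d) ^ (p / 2) := by
    simpa [legendreSym.eq_pow] using (ZMod.intCast_eq_intCast_iff _ _ _).mpr h
  have hp2 : p ≠ 2 := by
    rintro rfl
    exact hΔ0 (by rw [hΔ, show (2 : ZMod 2) = 0 from rfl, zero_mul, zero_mul])
  have hS := ZMod.sum_quadratic_pow_sub_two_eq_one hp2 hd0 hΔ0 hΔ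
  rw [← ZMod.intCast_zmod_eq_zero_iff_dvd, Dp, Int.cast_det, ← Matrix.exists_mulVec_eq_zero_iff]
  have : NeZero (p - 1) := ⟨by have := (Fact.out : p.Prime).two_le; omega⟩
  refine ⟨1, one_ne_zero, funext fun i => ?_⟩
  have hi : ((i : ℕ) + 1 : ZMod p) ≠ 0 := by
    rw [← Nat.cast_succ, ne_eq, ZMod.natCast_eq_zero_iff]
    exact Nat.not_dvd_of_pos_of_lt i.val.succ_pos (by omega)
  simp only [Matrix.mulVec, dotProduct, Matrix.map_apply, Matrix.of_apply, Pi.one_apply, mul_one,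
    Pi.zero_apply]
  push_cast
  exact ZMod.sum_fin_pred_quadratic_pow_eq_zero hi hS

/-- Let `p > 3` be a prime and `c, d` integers with `p ∤ d(c² - 4d)`. If
`c² - 4d ≡ 2d·((c²-4d)/p) (mod p)`, where `(·/p)` is the Legendre symbol, then
`D_p(c, d) ≡ 0 (mod p)`. -/
theorem stmt17 (p : ℕ) [Fact p.Prime] (hp3 : 3 < p) (c d : ℤ)
    (hd : ¬ (p : ℤ) ∣ d * (c ^ 2 - 4 * d))
    (h : c ^ 2 - 4 * d ≡ 2 * d * legendreSym p (c ^ 2 - 4 * d) [ZMOD p]) :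
    (p : ℤ) ∣ Dp p c d :=
  stmt17_general p c d hd h
end
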